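/- Let z and w be two variable-disjoint sequences of terms such that w is linear and θ = mgu(z, w). If s1 and s2 are two variable-disjoint terms occurring in z, then s1θ and s2θ are variable-disjoint terms. -/

import Mathlib

/- ## First-order terms -/

inductive Trm (F : Type) : Type
  | var : ℕ → Trm F
  | fn : F → List (Trm F) → Trm F

/-- A substitution: a mapping from variables to terms. -/
abbrev Subst (F : Type) := ℕ → Trm F

namespace Trm
variable {F : Type}

/-- Application of a substitution to a term. -/
def subst (σ : Subst F) : Trm F → Trm F
  | .var x => σ x
  | .fn f ts => .fn f (ts.attach.map (fun t => t.1.subst σ))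
decreasing_by simp_wf; have := List.sizeOf_lt_of_mem t.2; omega

/-- The set of variables occurring in a term. -/
def vars : Trm F → Set ℕ
  | .var x => {x}
  | .fn _ ts => (ts.attach.map (fun t => t.1.vars)).foldr (· ∪ ·) ∅
decreasing_by simp_wf; have := List.sizeOf_lt_of_mem t.2; omega

/-- The number of occurrences of a variable in a term. -/
def varCount (x : ℕ) : Trm F → ℕ
  | .var y => if y = x then 1 else 0
  | .fn _ ts => (ts.attach.map (fun t => t.1.varCount x)).sum
decreasing_by simp_wf; have := List.sizeOf_lt_of_mem t.2; omega

/-- The subterm relation. -/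
inductive IsSubterm : Trm F → Trm F → Prop
  | refl (t : Trm F) : IsSubterm t t
  | fn {s t : Trm F} {f : F} {ts : List (Trm F)} : t ∈ ts → IsSubterm s t → IsSubterm s (.fn f ts)

end Trm

/- ## Sequences of terms -/

/-- Application of a substitution to a sequence of terms. -/
def substList {F : Type} (σ : Subst F) (ts : List (Trm F)) : List (Trm F) :=
  ts.map (Trm.subst σ)

/-- The set of variables occurring in a sequence of terms. -/
def varsList {F : Type} (ts : List (Trm F)) : Set ℕ := ⋃ t ∈ ts, t.vars

/-- The number of occurrences of a variable in a sequence of terms. -/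
def varCountList {F : Type} (x : ℕ) (ts : List (Trm F)) : ℕ :=
  (ts.map (Trm.varCount x)).sum

/-- A sequence of terms is linear if every variable occurs at most once in it. -/
def LinearList {F : Type} (ts : List (Trm F)) : Prop :=
  ∀ x : ℕ, varCountList x ts ≤ 1

/-- A term occurs in a sequence of terms if it is a subterm of one of its components. -/
def OccursInList {F : Type} (s : Trm F) (ts : List (Trm F)) : Prop :=
  ∃ t ∈ ts, Trm.IsSubterm s t

namespace Subst
variable {F : Type}

/-- The identity (empty) substitution. -/
def id : Subst F := Trm.var

/-- Composition of substitutions: `(comp σ τ)` applies `σ` first, then `τ`. -/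
def comp (σ τ : Subst F) : Subst F := fun x => (σ x).subst τ

/-- The domain of a substitution. -/
def dom (σ : Subst F) : Set ℕ := {x | σ x ≠ Trm.var x}

/-- A substitution has finite domain. -/
def FiniteDom (σ : Subst F) : Prop := σ.dom.Finite

/-- The set of variables of a substitution: its domain together with the
variables occurring in the images of domain variables. -/
def vars (σ : Subst F) : Set ℕ := σ.dom ∪ ⋃ x ∈ σ.dom, (σ x).vars

/-- A renaming: a substitution given by a permutation of the variables. -/
def IsRenaming (σ : Subst F) : Prop := ∃ e : ℕ ≃ ℕ, σ = fun x => Trm.var (e x)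

end Subst

/-- `θ` is a unifier of the sequences of terms `z` and `w`. -/
def IsUnifierList {F : Type} (θ : Subst F) (z w : List (Trm F)) : Prop :=
  substList θ z = substList θ w

/-- `θ` is a most general unifier (mgu) of the sequences of terms `z` and `w`. -/
def IsMguList {F : Type} (θ : Subst F) (z w : List (Trm F)) : Prop :=
  IsUnifierList θ z w ∧ ∀ σ : Subst F, IsUnifierList σ z w → ∃ γ : Subst F, Subst.comp θ γ = σ

/- ## Atoms, queries, clauses, programs (in presence of a fixed mode) -/

/-- An atom `p(s,t)`, where `s` is the sequence of terms filling in the input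
positions and `t` the sequence of terms filling in the output positions
(as determined by the fixed mode of `p`). -/
structure Atom (P F : Type) where
  rel : P
  inp : List (Trm F)
  out : List (Trm F)

namespace Atom
variable {P F : Type}

def subst (σ : Subst F) (A : Atom P F) : Atom P F :=
  ⟨A.rel, substList σ A.inp, substList σ A.out⟩

def vars (A : Atom P F) : Set ℕ := varsList A.inp ∪ varsList A.out

/-- `θ` is a unifier of two atoms. -/
def IsUnifier (θ : Subst F) (A B : Atom P F) : Prop := A.subst θ = B.subst θ

/-- `θ` is a most general unifier of two atoms. -/
def IsMgu (θ : Subst F) (A B : Atom P F) : Prop :=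
  IsUnifier θ A B ∧ ∀ σ : Subst F, IsUnifier σ A B → ∃ γ : Subst F, Subst.comp θ γ = σ

/-- An mgu of two atoms is relevant if its variables are among those of the two atoms. -/
def RelevantFor (θ : Subst F) (A B : Atom P F) : Prop :=
  Subst.vars θ ⊆ A.vars ∪ B.vars

end Atom

/-- A query: a finite sequence of atoms. -/
abbrev Query (P F : Type) := List (Atom P F)

/-- The set of variables of a query. -/
def queryVars {P F : Type} (Q : Query P F) : Set ℕ := ⋃ A ∈ Q, A.vars

/-- `In(Q)`: the sequence of terms filling in the input positions of `Q`. -/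
def queryInp {P F : Type} (Q : Query P F) : List (Trm F) := Q.flatMap Atom.inp

/-- `Out(Q)`: the sequence of terms filling in the output positions of `Q`. -/
def queryOut {P F : Type} (Q : Query P F) : List (Trm F) := Q.flatMap Atom.out

/-- A clause `H ← B`. -/
structure Clause (P F : Type) where
  head : Atom P F
  body : Query P F

namespace Clause
variable {P F : Type}

def subst (σ : Subst F) (c : Clause P F) : Clause P F :=
  ⟨c.head.subst σ, c.body.map (Atom.subst σ)⟩

def vars (c : Clause P F) : Set ℕ := c.head.vars ∪ queryVars c.body

end Clause

/-- A variant of a clause: obtained by applying a renaming. -/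
def IsVariantOf {P F : Type} (c c' : Clause P F) : Prop :=
  ∃ ρ : Subst F, Subst.IsRenaming ρ ∧ c' = c.subst ρ

/-- A program: a finite set of clauses (represented as a list). -/
abbrev Program (P F : Type) := List (Clause P F)

/- ## Nicely- and simply-moded objects -/

/-- A query `p1(s1,t1),…,pn(sn,tn)` is nicely-moded if `t1,…,tn` is a linear
sequence of terms and for all `i`, `Var(si) ∩ ⋃_{j=i}^{n} Var(tj) = ∅`. -/
def NMQuery {P F : Type} (Q : Query P F) : Prop :=
  LinearList (queryOut Q) ∧
  ∀ (i : ℕ) (h : i < Q.length),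
    varsList (Q.get ⟨i, h⟩).inp ∩ varsList (queryOut (Q.drop i)) = ∅

/-- A clause `p(s0,t0) ← Q` is nicely-moded if `Q` is nicely-moded and
`Var(s0)` is disjoint from the output variables of `Q`. -/
def NMClause {P F : Type} (c : Clause P F) : Prop :=
  NMQuery c.body ∧ varsList c.head.inp ∩ varsList (queryOut c.body) = ∅

/-- A program is nicely-moded if all its clauses are. -/
def NMProgram {P F : Type} (Pgm : Program P F) : Prop := ∀ c ∈ Pgm, NMClause c

/-- A query is simply-moded if it is nicely-moded and its sequence of output
terms is a (linear) sequence of variables. -/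
def SMQuery {P F : Type} (Q : Query P F) : Prop :=
  NMQuery Q ∧ ∀ t ∈ queryOut Q, ∃ x : ℕ, t = Trm.var x

/-- A clause is simply-moded if it is nicely-moded and its body is simply-moded. -/
def SMClause {P F : Type} (c : Clause P F) : Prop :=
  NMClause c ∧ SMQuery c.body

/-- A program is simply-moded if all its clauses are. -/
def SMProgram {P F : Type} (Pgm : Program P F) : Prop := ∀ c ∈ Pgm, SMClause c

/- ## Input-consuming derivations -/

/-- `ICStepAt Q k c θ Q'` : the query `Q'` is obtained from `Q` by an
input-consuming derivation step resolving the atom at position `k` with the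
(already renamed-apart) input clause `c`, via the relevant mgu `θ`. -/
def ICStepAt {P F : Type} (Q : Query P F) (k : ℕ) (c : Clause P F) (θ : Subst F)
    (Q' : Query P F) : Prop :=
  ∃ h : k < Q.length,
    Atom.IsMgu θ (Q.get ⟨k, h⟩) c.head ∧
    Atom.RelevantFor θ (Q.get ⟨k, h⟩) c.head ∧
    substList θ (Q.get ⟨k, h⟩).inp = (Q.get ⟨k, h⟩).inp ∧
    Q' = (Q.take k ++ c.body ++ Q.drop (k + 1)).map (Atom.subst θ)

/-- A (possibly partial, possibly infinite) input-consuming derivation of length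
`len` in program `Pgm`: queries `Q i`, selected atom positions `sel i`, input
clauses `cl i` (variants of program clauses) and relevant mgus `sub i`,
satisfying standardization apart. -/
structure ICDeriv {P F : Type} (Pgm : Program P F) (len : ℕ∞) where
  Q : ℕ → Query P F
  sel : ℕ → ℕ
  cl : ℕ → Clause P F
  sub : ℕ → Subst F
  step : ∀ i : ℕ, (i : ℕ∞) < len → ICStepAt (Q i) (sel i) (cl i) (sub i) (Q (i + 1))
  fromProg : ∀ i : ℕ, (i : ℕ∞) < len → ∃ c ∈ Pgm, IsVariantOf c (cl i)
  standApart : ∀ i : ℕ, (i : ℕ∞) < len →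
    Clause.vars (cl i) ∩
      (queryVars (Q 0) ∪ ⋃ j < i, (Clause.vars (cl j) ∪ Subst.vars (sub j))) = ∅

/-- The composition `θ1 θ2 ⋯ θn` of the first `n` step substitutions. -/
def compRange {F : Type} (θ : ℕ → Subst F) : ℕ → Subst F
  | 0 => Subst.id
  | n + 1 => Subst.comp (compRange θ n) (θ n)

/-- There exists an infinite input-consuming derivation of `Pgm ∪ {Q0}`. -/
def InfICDeriv {P F : Type} (Pgm : Program P F) (Q0 : Query P F) : Prop :=
  ∃ d : ICDeriv Pgm ⊤, d.Q 0 = Q0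

/-- A program is input terminating if all its input-consuming derivations
starting in a nicely-moded query are finite. -/
def InputTerminating {P F : Type} (Pgm : Program P F) : Prop :=
  ∀ Q : Query P F, NMQuery Q → ¬ InfICDeriv Pgm Q

/- ## Dependency between predicate symbols -/

/-- `p` is defined in `Pgm` if `p` occurs in the head of one of its clauses. -/
def DefinedIn {P F : Type} (Pgm : Program P F) (p : P) : Prop :=
  ∃ c ∈ Pgm, c.head.rel = p

/-- `p` occurs in `Pgm` (in a head or in a body). -/
def OccursInProg {P F : Type} (Pgm : Program P F) (p : P) : Prop :=
  ∃ c ∈ Pgm, c.head.rel = p ∨ ∃ B ∈ c.body, B.rel = p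

/-- `Pgm` extends `R` if no relation defined in `Pgm` occurs in `R`. -/
def ProgExtends {P F : Type} (Pgm R : Program P F) : Prop :=
  ∀ p : P, DefinedIn Pgm p → ¬ OccursInProg R p

/-- `p` refers to `q` in `Pgm`. -/
def RefersTo {P F : Type} (Pgm : Program P F) (p q : P) : Prop :=
  ∃ c ∈ Pgm, c.head.rel = p ∧ ∃ B ∈ c.body, B.rel = q

/-- `p ⊒ q` : `p` depends on `q` (reflexive-transitive closure of refers-to). -/
def DependsOnProg {P F : Type} (Pgm : Program P F) : P → P → Prop :=
  Relation.ReflTransGen (RefersTo Pgm)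

/-- `p ≃ q` : `p` and `q` are mutually dependent. -/
def MutDep {P F : Type} (Pgm : Program P F) (p q : P) : Prop :=
  DependsOnProg Pgm p q ∧ DependsOnProg Pgm q p

/-- `p ⊐ q` : `p ⊒ q` and not `p ≃ q`. -/
def SqSupset {P F : Type} (Pgm : Program P F) (p q : P) : Prop :=
  DependsOnProg Pgm p q ∧ ¬ MutDep Pgm p q

/- ## Moded level mappings and quasi recurrency -/

/-- A moded level mapping: a function from atoms to naturals which does not
depend on the output terms (and is invariant under renaming, as it is a
function on the extended Herbrand base). -/
def ModedLevelMapping {P F : Type} (lvl : Atom P F → ℕ) : Prop :=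
  (∀ (p : P) (s t u : List (Trm F)), lvl ⟨p, s, t⟩ = lvl ⟨p, s, u⟩) ∧
  (∀ (A : Atom P F) (ρ : Subst F), Subst.IsRenaming ρ → lvl (A.subst ρ) = lvl A)

/-- A clause is quasi recurrent wrt `lvl` (in program `Pgm`) if for every
instance `H ← A,B,C` of it, if `Rel(H) ≃ Rel(B)` then `|H| > |B|`. -/
def QRClause {P F : Type} (Pgm : Program P F) (lvl : Atom P F → ℕ) (c : Clause P F) : Prop :=
  ∀ θ : Subst F, ∀ B ∈ c.body, MutDep Pgm c.head.rel B.rel →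
    lvl (B.subst θ) < lvl (c.head.subst θ)

/-- A program is quasi recurrent wrt `lvl` if all its clauses are. -/
def QuasiRecurrentWrt {P F : Type} (Pgm : Program P F) (lvl : Atom P F → ℕ) : Prop :=
  ∀ c ∈ Pgm, QRClause Pgm lvl c

/-- A program is quasi recurrent if it is quasi recurrent wrt some moded level mapping. -/
def QuasiRecurrent {P F : Type} (Pgm : Program P F) : Prop :=
  ∃ lvl : Atom P F → ℕ, ModedLevelMapping lvl ∧ QuasiRecurrentWrt Pgm lvl
/- ## IC-trees -/

/-- `Q'` is a resolvent of `Q` and (a renamed-apart variant of) the clause `c`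
with respect to the atom at position `k`, via an input-consuming step. -/
def ICResolventOf {P F : Type} (Q : Query P F) (k : ℕ) (c : Clause P F)
    (Q' : Query P F) : Prop :=
  ∃ (c' : Clause P F) (θ : Subst F),
    IsVariantOf c c' ∧ Clause.vars c' ∩ queryVars Q = ∅ ∧ ICStepAt Q k c' θ Q'

/-- The atom at position `k` of `Q` is input-consuming resolvable wrt clause `c`. -/
def ICResolvable {P F : Type} (Q : Query P F) (k : ℕ) (c : Clause P F) : Prop :=
  ∃ Q' : Query P F, ICResolventOf Q k c Q'

/-- An IC-tree for `Pgm ∪ {Q0}`, represented by the set `T` of its paths from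
the root (a node of the tree is identified with the path reaching it):
its branches are input-consuming derivations of `Pgm ∪ {Q0}`, and every node
has exactly one descendant for every atom of its query and every program
clause wrt which that atom is input-consuming resolvable, this descendant
being a resolvent. -/
structure IsICTree {P F : Type} (Pgm : Program P F) (Q0 : Query P F)
    (T : Set (List (Query P F))) : Prop where
  root : [Q0] ∈ T
  starts : ∀ l ∈ T, ∃ l' : List (Query P F), l = Q0 :: l'
  prefixClosed : ∀ (l : List (Query P F)) (Qn : Query P F), l ++ [Qn] ∈ T → l ≠ [] → l ∈ T
  children : ∀ l ∈ T, ∀ (k : ℕ) (c : Clause P F), c ∈ Pgm →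
    ICResolvable (l.getLastD []) k c →
    ∃! Q' : Query P F, l ++ [Q'] ∈ T ∧ ICResolventOf (l.getLastD []) k c Q'
  childrenOnly : ∀ (l : List (Query P F)) (Q' : Query P F), l ++ [Q'] ∈ T → l ≠ [] →
    ∃ (k : ℕ) (c : Clause P F), c ∈ Pgm ∧ ICResolventOf (l.getLastD []) k c Q'
  branches : ∀ l ∈ T, ∃ d : ICDeriv Pgm ((l.length - 1 : ℕ) : ℕ∞),
    ∀ i < l.length, d.Q i = l.getD i []

/- ## Input-recursive programs -/

/-- A clause `H ← A,B,C` is input-recursive (in `Pgm`) if whenever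
`Rel(H) ≃ Rel(B)` then `Var(In(B)) ⊆ Var(In(H))`. -/
def InputRecursiveClause {P F : Type} (Pgm : Program P F) (c : Clause P F) : Prop :=
  ∀ B ∈ c.body, MutDep Pgm c.head.rel B.rel → varsList B.inp ⊆ varsList c.head.inp

/-- A program is input-recursive if all its clauses are. -/
def InputRecursive {P F : Type} (Pgm : Program P F) : Prop :=
  ∀ c ∈ Pgm, InputRecursiveClause Pgm c

namespace Trm
variable {F : Type}

theorem indOn {motive : Trm F → Prop} (hv : ∀ x, motive (.var x))
    (hf : ∀ (f : F) (ts : List (Trm F)), (∀ s ∈ ts, motive s) → motive (.fn f ts)) :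
    ∀ t, motive t
  | .var x => hv x
  | .fn f ts => hf f ts (fun s hs => indOn hv hf s)
decreasing_by simp_wf; have := List.sizeOf_lt_of_mem hs; omega

@[simp] theorem subst_var (σ : Subst F) (x : ℕ) : (var x : Trm F).subst σ = σ x := by
  rw [subst]

@[simp] theorem subst_fn (σ : Subst F) (f : F) (ts : List (Trm F)) :
    (fn f ts).subst σ = fn f (ts.map (fun t => t.subst σ)) := by
  rw [subst]
  congr 1
  simp [List.attach_map_val]

@[simp] theorem vars_var (x : ℕ) : (var x : Trm F).vars = {x} := by rw [vars]

theorem foldr_union_eq (l : List (Set ℕ)) : l.foldr (· ∪ ·) ∅ = ⋃ s ∈ l, s := by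
  induction l with
  | nil => simp
  | cons a l ih => simp [List.foldr_cons, ih]

@[simp] theorem vars_fn (f : F) (ts : List (Trm F)) :
    (fn f ts).vars = ⋃ t ∈ ts, t.vars := by
  rw [vars, foldr_union_eq]
  ext x
  simp

@[simp] theorem varCount_var (x y : ℕ) :
    (var y : Trm F).varCount x = if y = x then 1 else 0 := by rw [varCount]

@[simp] theorem varCount_fn (x : ℕ) (f : F) (ts : List (Trm F)) :
    (fn f ts).varCount x = (ts.map (fun t => t.varCount x)).sum := by
  rw [varCount]
  congr 1
  simp [List.attach_map_val]

theorem mem_vars_iff_count (x : ℕ) : ∀ t : Trm F, x ∈ t.vars ↔ 0 < t.varCount x := by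
  refine indOn ?_ ?_
  · intro y; simp [eq_comm]
    split <;> simp_all
  · intro f ts ih
    simp only [vars_fn, varCount_fn, Set.mem_iUnion]
    rw [Nat.pos_iff_ne_zero, Ne, List.sum_eq_zero_iff]
    push_neg
    constructor
    · rintro ⟨t, ht, hx⟩
      exact ⟨t.varCount x, by simpa using ⟨t, ht, rfl⟩, by have := (ih t ht).1 hx; omega⟩
    · rintro ⟨n, hn, hne⟩
      simp only [List.mem_map] at hn
      obtain ⟨t, ht, rfl⟩ := hn
      exact ⟨t, ht, (ih t ht).2 (by omega)⟩

theorem vars_subst (σ : Subst F) : ∀ t : Trm F,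
    (t.subst σ).vars = ⋃ x ∈ t.vars, (σ x).vars := by
  refine indOn ?_ ?_
  · intro y; simp
  · intro f ts ih
    simp only [subst_fn, vars_fn, List.mem_map]
    ext y
    simp only [Set.mem_iUnion]
    constructor
    · rintro ⟨t, ⟨s, hs, rfl⟩, hy⟩
      rw [ih s hs] at hy
      simp only [Set.mem_iUnion] at hy
      obtain ⟨x, hx, hy⟩ := hy
      exact ⟨x, ⟨s, hs, hx⟩, hy⟩
    · rintro ⟨x, ⟨s, hs, hx⟩, hy⟩
      exact ⟨s.subst σ, ⟨s, hs, rfl⟩, by rw [ih s hs]; exact Set.mem_biUnion hx hy⟩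

theorem subst_eq_of_vars (σ : Subst F) : ∀ t : Trm F,
    (∀ x ∈ t.vars, σ x = var x) → t.subst σ = t := by
  refine indOn ?_ ?_
  · intro y h; simp [h y (by simp)]
  · intro f ts ih h
    rw [subst_fn]
    congr 1
    have : ts.map (fun t => t.subst σ) = ts.map id := by
      refine List.map_congr_left ?_
      intro s hs
      exact ih s hs (fun x hx => h x (by rw [vars_fn]; exact Set.mem_biUnion hs hx))
    simpa using this

end Trm

theorem List.map_eq_self_mem {α : Type*} {f : α → α} : ∀ {l : List α}, l.map f = l → ∀ a ∈ l, f a = a := by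
  intro l
  induction l with
  | nil => simp
  | cons b l ih =>
    intro h a ha
    simp only [List.map_cons, List.cons.injEq] at h
    rw [List.mem_cons] at ha
    rcases ha with rfl | ha
    · exact h.1
    · exact ih h.2 a ha

namespace Trm
variable {F : Type}

theorem vars_of_subst_eq_self {σ : Subst F} : ∀ t : Trm F,
    t.subst σ = t → ∀ x ∈ t.vars, σ x = var x := by
  refine indOn ?_ ?_
  · intro y h x hx
    simp only [vars_var, Set.mem_singleton_iff] at hx
    subst hx
    simpa using h
  · intro f ts ih h x hx
    rw [subst_fn, fn.injEq] at h
    rw [vars_fn] at hx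
    simp only [Set.mem_iUnion] at hx
    obtain ⟨t, ht, hx⟩ := hx
    exact ih t ht (List.map_eq_self_mem h.2 t ht) x hx

theorem subst_comp (σ τ : Subst F) : ∀ t : Trm F,
    t.subst (Subst.comp σ τ) = (t.subst σ).subst τ := by
  refine indOn ?_ ?_
  · intro y; simp [Subst.comp]
  · intro f ts ih
    simp only [subst_fn, List.map_map, fn.injEq, true_and]
    exact List.map_congr_left (fun s hs => ih s hs)

theorem IsSubterm.vars_subset {s t : Trm F} (h : IsSubterm s t) : s.vars ⊆ t.vars := by
  induction h with
  | refl => exact le_refl _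
  | fn hmem _ ih =>
    refine ih.trans ?_
    rw [vars_fn]
    exact Set.subset_biUnion_of_mem hmem

theorem eq_var_of_subst_eq_var {σ : Subst F} {t : Trm F} {v : ℕ}
    (h : t.subst σ = var v) : ∃ u, t = var u ∧ σ u = var v := by
  cases t with
  | var u => exact ⟨u, rfl, by simpa using h⟩
  | fn f ts => rw [subst_fn] at h; exact absurd h (by simp)

end Trm

section Lists
variable {F : Type}

@[simp] theorem substList_nil (σ : Subst F) : substList σ [] = [] := rfl
@[simp] theorem substList_cons (σ : Subst F) (t : Trm F) (l : List (Trm F)) :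
    substList σ (t :: l) = t.subst σ :: substList σ l := rfl
theorem substList_append (σ : Subst F) (l1 l2 : List (Trm F)) :
    substList σ (l1 ++ l2) = substList σ l1 ++ substList σ l2 := by
  simp [substList]

theorem substList_comp (σ τ : Subst F) (l : List (Trm F)) :
    substList (Subst.comp σ τ) l = substList τ (substList σ l) := by
  simp only [substList, List.map_map]
  exact List.map_congr_left (fun s _ => Trm.subst_comp σ τ s)

@[simp] theorem varsList_nil : varsList ([] : List (Trm F)) = ∅ := by simp [varsList]
@[simp] theorem varsList_cons (t : Trm F) (l : List (Trm F)) :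
    varsList (t :: l) = t.vars ∪ varsList l := by
  simp [varsList]

theorem varsList_append (l1 l2 : List (Trm F)) :
    varsList (l1 ++ l2) = varsList l1 ∪ varsList l2 := by
  induction l1 with
  | nil => simp
  | cons t l ih => rw [List.cons_append, varsList_cons, varsList_cons, ih, Set.union_assoc]

theorem mem_varsList {x : ℕ} {l : List (Trm F)} :
    x ∈ varsList l ↔ ∃ t ∈ l, x ∈ t.vars := by simp [varsList]

theorem varsList_substList (σ : Subst F) (l : List (Trm F)) :
    varsList (substList σ l) = ⋃ x ∈ varsList l, (σ x).vars := by
  ext y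
  simp only [mem_varsList, substList, List.mem_map, Set.mem_iUnion]
  constructor
  · rintro ⟨t, ⟨s, hs, rfl⟩, hy⟩
    rw [Trm.vars_subst] at hy
    simp only [Set.mem_iUnion] at hy
    obtain ⟨x, hx, hy⟩ := hy
    exact ⟨x, ⟨s, hs, hx⟩, hy⟩
  · rintro ⟨x, ⟨s, hs, hxs⟩, hy⟩
    exact ⟨s.subst σ, ⟨s, hs, rfl⟩, by rw [Trm.vars_subst]; exact Set.mem_biUnion hxs hy⟩

@[simp] theorem varCountList_nil (x : ℕ) : varCountList x ([] : List (Trm F)) = 0 := rfl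
@[simp] theorem varCountList_cons (x : ℕ) (t : Trm F) (l : List (Trm F)) :
    varCountList x (t :: l) = t.varCount x + varCountList x l := by
  simp [varCountList]

theorem varCountList_append (x : ℕ) (l1 l2 : List (Trm F)) :
    varCountList x (l1 ++ l2) = varCountList x l1 + varCountList x l2 := by
  simp [varCountList]

theorem mem_varsList_iff_count {x : ℕ} {l : List (Trm F)} :
    x ∈ varsList l ↔ 0 < varCountList x l := by
  induction l with
  | nil => simp
  | cons t l ih =>
    simp only [varsList_cons, Set.mem_union, varCountList_cons, ih,
      Trm.mem_vars_iff_count]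
    omega

end Lists

section MguTools
variable {F : Type}

theorem Subst.comp_assoc (σ τ ρ : Subst F) :
    Subst.comp (Subst.comp σ τ) ρ = Subst.comp σ (Subst.comp τ ρ) := by
  funext x
  simp only [Subst.comp]
  rw [Trm.subst_comp]

/-- The elementary substitution binding `v` to `t`. -/
def elemSub (v : ℕ) (t : Trm F) : Subst F := fun y => if y = v then t else .var y

@[simp] theorem elemSub_same (v : ℕ) (t : Trm F) : elemSub v t v = t := by simp [elemSub]
theorem elemSub_ne {v y : ℕ} (t : Trm F) (h : y ≠ v) : elemSub v t y = .var y := by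
  simp [elemSub, h]

theorem subst_elemSub_of_not_mem {v : ℕ} {t s : Trm F} (h : v ∉ s.vars) :
    s.subst (elemSub v t) = s := by
  refine Trm.subst_eq_of_vars _ _ (fun x hx => elemSub_ne t ?_)
  rintro rfl; exact h hx

theorem isUnifierList_singleton {θ : Subst F} {a b : Trm F} :
    IsUnifierList θ [a] [b] ↔ a.subst θ = b.subst θ := by
  simp [IsUnifierList]

theorem mgu_elem_right {v : ℕ} {t : Trm F} (hv : v ∉ t.vars) :
    IsMguList (elemSub v t) [t] [.var v] := by
  constructor
  · rw [isUnifierList_singleton, subst_elemSub_of_not_mem hv]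
    simp
  · intro σ hσ
    rw [isUnifierList_singleton] at hσ
    simp only [Trm.subst_var] at hσ
    refine ⟨σ, funext fun y => ?_⟩
    by_cases hy : y = v
    · subst hy; simp [Subst.comp, hσ]
    · simp [Subst.comp, elemSub_ne t hy]

theorem mgu_elem_left {x : ℕ} {t : Trm F} (hx : x ∉ t.vars) :
    IsMguList (elemSub x t) [.var x] [t] := by
  constructor
  · rw [isUnifierList_singleton, subst_elemSub_of_not_mem hx]
    simp
  · intro σ hσ
    rw [isUnifierList_singleton] at hσ
    simp only [Trm.subst_var] at hσ
    refine ⟨σ, funext fun y => ?_⟩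
    by_cases hy : y = x
    · subst hy; simp [Subst.comp, hσ]
    · simp [Subst.comp, elemSub_ne t hy]

theorem substList_length (σ : Subst F) (l : List (Trm F)) :
    (substList σ l).length = l.length := by simp [substList]

theorem unifierList_append_iff {σ : Subst F} {z1 w1 z2 w2 : List (Trm F)}
    (hlen : z1.length = w1.length) :
    IsUnifierList σ (z1 ++ z2) (w1 ++ w2) ↔ IsUnifierList σ z1 w1 ∧ IsUnifierList σ z2 w2 := by
  unfold IsUnifierList
  rw [substList_append, substList_append]
  constructor
  · intro h
    have := List.append_inj h (by rw [substList_length, substList_length, hlen])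
    exact ⟨this.1, this.2⟩
  · rintro ⟨h1, h2⟩; rw [h1, h2]

theorem mgu_comp {σ1 σ2 : Subst F} {z1 w1 z2 w2 : List (Trm F)}
    (h1 : IsMguList σ1 z1 w1)
    (h2 : IsMguList σ2 (substList σ1 z2) (substList σ1 w2)) :
    IsMguList (Subst.comp σ1 σ2) (z1 ++ z2) (w1 ++ w2) := by
  have hlen : z1.length = w1.length := by
    have := congrArg List.length h1.1
    simpa [substList_length] using this
  constructor
  · rw [unifierList_append_iff hlen]
    constructor
    · have := h1.1
      unfold IsUnifierList at this ⊢
      rw [substList_comp, substList_comp, this]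
    · have := h2.1
      unfold IsUnifierList at this ⊢
      rw [substList_comp, substList_comp]
      exact this
  · intro σ hσ
    rw [unifierList_append_iff hlen] at hσ
    obtain ⟨γ1, hγ1⟩ := h1.2 σ hσ.1
    have hγ1u : IsUnifierList γ1 (substList σ1 z2) (substList σ1 w2) := by
      unfold IsUnifierList
      rw [← substList_comp, ← substList_comp, hγ1]
      exact hσ.2
    obtain ⟨γ2, hγ2⟩ := h2.2 γ1 hγ1u
    exact ⟨γ2, by rw [Subst.comp_assoc, hγ2, hγ1]⟩

/-- Relevance of a substitution within a variable set `S`. -/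
def Relev (σ : Subst F) (S : Set ℕ) : Prop :=
  ∀ x, σ x = Trm.var x ∨ (x ∈ S ∧ (σ x).vars ⊆ S)

/-- The images under `σ` of distinct variables outside `V` are variable-disjoint. -/
def GoodSub (σ : Subst F) (V : Set ℕ) : Prop :=
  ∀ a b : ℕ, a ≠ b → a ∉ V → b ∉ V → (σ a).vars ∩ (σ b).vars = ∅

theorem Relev.mono {σ : Subst F} {S S' : Set ℕ} (h : S ⊆ S') (hr : Relev σ S) :
    Relev σ S' := by
  intro x
  rcases hr x with h1 | ⟨h1, h2⟩
  · exact Or.inl h1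
  · exact Or.inr ⟨h h1, h2.trans h⟩

theorem GoodSub.mono {σ : Subst F} {V V' : Set ℕ} (h : V ⊆ V') (hg : GoodSub σ V) :
    GoodSub σ V' :=
  fun a b hne ha hb => hg a b hne (fun c => ha (h c)) (fun c => hb (h c))

theorem Relev.vars_subset {σ : Subst F} {S : Set ℕ} (hr : Relev σ S) (x : ℕ) :
    (σ x).vars ⊆ S ∪ {x} := by
  rcases hr x with h1 | ⟨_, h2⟩
  · rw [h1]; simp
  · exact h2.trans (Set.subset_union_left)

theorem Relev.eq_var {σ : Subst F} {S : Set ℕ} (hr : Relev σ S) {x : ℕ} (hx : x ∉ S) :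
    σ x = Trm.var x := by
  rcases hr x with h1 | ⟨h1, _⟩
  · exact h1
  · exact absurd h1 hx

theorem Relev.comp {σ1 σ2 : Subst F} {S : Set ℕ} (h1 : Relev σ1 S) (h2 : Relev σ2 S) :
    Relev (Subst.comp σ1 σ2) S := by
  intro x
  have hc : Subst.comp σ1 σ2 x = (σ1 x).subst σ2 := rfl
  rcases h1 x with ha | ⟨ha, hsub⟩
  · rw [hc, ha, Trm.subst_var]
    exact h2 x
  · refine Or.inr ⟨ha, ?_⟩
    rw [hc, Trm.vars_subst]
    refine Set.iUnion₂_subset fun y hy => ?_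
    rcases h2 y with hb | ⟨_, hb⟩
    · rw [hb]; simpa using hsub hy
    · exact hb

theorem GoodSub.comp {σ1 σ2 : Subst F} {V1 V2 S1 : Set ℕ}
    (g1 : GoodSub σ1 V1) (g2 : GoodSub σ2 V2) (r1 : Relev σ1 S1)
    (hS : S1 ∩ V2 = ∅) :
    GoodSub (Subst.comp σ1 σ2) (V1 ∪ V2) := by
  intro a b hne ha hb
  have hd : (σ1 a).vars ∩ (σ1 b).vars = ∅ :=
    g1 a b hne (fun h => ha (Or.inl h)) (fun h => hb (Or.inl h))
  have key : ∀ x : ℕ, x ∉ V1 ∪ V2 → ∀ c ∈ (σ1 x).vars, c ∉ V2 := by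
    intro x hx c hc hcV
    rcases r1.vars_subset x hc with h | h
    · exact absurd (Set.mem_inter h hcV) (by rw [hS]; exact id)
    · simp only [Set.mem_singleton_iff] at h
      subst h
      exact hx (Or.inr hcV)
  rw [Set.eq_empty_iff_forall_notMem]
  rintro v ⟨hva, hvb⟩
  have hca : (Subst.comp σ1 σ2 a).vars = ⋃ c ∈ (σ1 a).vars, (σ2 c).vars := Trm.vars_subst _ _
  have hcb : (Subst.comp σ1 σ2 b).vars = ⋃ c ∈ (σ1 b).vars, (σ2 c).vars := Trm.vars_subst _ _
  rw [hca] at hva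
  rw [hcb] at hvb
  simp only [Set.mem_iUnion] at hva hvb
  obtain ⟨c, hc, hvc⟩ := hva
  obtain ⟨d, hd', hvd⟩ := hvb
  have hcd : c ≠ d := by
    rintro rfl
    exact absurd (Set.mem_inter hc hd') (by rw [hd]; exact id)
  have : (σ2 c).vars ∩ (σ2 d).vars = ∅ :=
    g2 c d hcd (key a ha c hc) (key b hb d hd')
  exact absurd (Set.mem_inter hvc hvd) (by rw [this]; exact id)

theorem relev_elemSub (v : ℕ) (t : Trm F) : Relev (elemSub v t) ({v} ∪ t.vars) := by
  intro x
  by_cases hx : x = v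
  · subst hx
    exact Or.inr ⟨Or.inl rfl, by simp⟩
  · exact Or.inl (elemSub_ne t hx)

theorem goodSub_elemSub (v : ℕ) (t : Trm F) : GoodSub (elemSub v t) ({v} ∪ t.vars) := by
  intro a b hne ha hb
  rw [elemSub_ne t (fun h => ha (Or.inl h)), elemSub_ne t (fun h => hb (Or.inl h))]
  simp [Set.singleton_inter_eq_empty, hne, Ne.symm hne]

theorem goodSub_elemSub' (v : ℕ) (t : Trm F) : GoodSub (elemSub v t) t.vars := by
  intro a b hne ha hb
  by_cases hav : a = v
  · subst hav
    rw [elemSub_same, elemSub_ne t (Ne.symm hne)]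
    rw [Set.eq_empty_iff_forall_notMem]
    rintro y ⟨hy1, hy2⟩
    simp only [Trm.vars_var, Set.mem_singleton_iff] at hy2
    subst hy2; exact hb hy1
  · by_cases hbv : b = v
    · subst hbv
      rw [elemSub_same, elemSub_ne t hav]
      rw [Set.eq_empty_iff_forall_notMem]
      rintro y ⟨hy1, hy2⟩
      simp only [Trm.vars_var, Set.mem_singleton_iff] at hy1
      subst hy1; exact ha hy2
    · rw [elemSub_ne t hav, elemSub_ne t hbv]
      simp [Set.singleton_inter_eq_empty, hne, Ne.symm hne]

end MguTools

section MoreTools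
variable {F : Type}

theorem substList_eq_of_vars {σ : Subst F} {l : List (Trm F)}
    (h : ∀ x ∈ varsList l, σ x = Trm.var x) : substList σ l = l := by
  have : l.map (fun t => t.subst σ) = l.map id :=
    List.map_congr_left fun t ht =>
      Trm.subst_eq_of_vars σ t (fun x hx => h x (mem_varsList.2 ⟨t, ht, hx⟩))
  simpa [substList] using this

theorem sizeOf_append_trm (l1 l2 : List (Trm F)) :
    sizeOf (l1 ++ l2) + 1 = sizeOf l1 + sizeOf l2 := by
  induction l1 with
  | nil => simp; omega
  | cons a l ih => simp at *; omega

theorem unifierList_length {θ : Subst F} {z w : List (Trm F)}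
    (h : IsUnifierList θ z w) : z.length = w.length := by
  have := congrArg List.length h
  simpa [substList_length] using this

theorem unifierList_cons_iff {θ : Subst F} {a b : Trm F} {l m : List (Trm F)} :
    IsUnifierList θ (a :: l) (b :: m) ↔ a.subst θ = b.subst θ ∧ IsUnifierList θ l m := by
  simp [IsUnifierList]

theorem unifierList_fn_iff {θ : Subst F} {f g : F} {ts us : List (Trm F)}
    (hlen : ts.length = us.length) :
    IsUnifierList θ [Trm.fn g ts] [Trm.fn f us] ↔ g = f ∧ IsUnifierList θ ts us := by
  rw [isUnifierList_singleton]
  simp only [Trm.subst_fn, Trm.fn.injEq]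
  unfold IsUnifierList substList
  tauto

theorem goodSub_elemSub_dom (v : ℕ) (t : Trm F) : GoodSub (elemSub v t) {v} := by
  intro a b hne ha hb
  simp only [Set.mem_singleton_iff] at ha hb
  rw [elemSub_ne t ha, elemSub_ne t hb]
  simp [Set.singleton_inter_eq_empty, hne, Ne.symm hne]

theorem mgu_flatten {σ : Subst F} {f : F} {ts us z' w' : List (Trm F)}
    (hlen : ts.length = us.length)
    (h : IsMguList σ (ts ++ z') (us ++ w')) :
    IsMguList σ (Trm.fn f ts :: z') (Trm.fn f us :: w') := by
  constructor
  · have := (unifierList_append_iff hlen).1 h.1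
    rw [unifierList_cons_iff]
    refine ⟨?_, this.2⟩
    have := ((unifierList_fn_iff (f := f) (g := f) hlen).2 ⟨rfl, this.1⟩)
    rw [isUnifierList_singleton] at this
    exact this
  · intro σ' hσ'
    rw [unifierList_cons_iff] at hσ'
    apply h.2
    rw [unifierList_append_iff hlen]
    refine ⟨?_, hσ'.2⟩
    have := (unifierList_fn_iff (f := f) (g := f) hlen).1
      (isUnifierList_singleton.2 hσ'.1)
    exact this.2

end MoreTools

theorem exists_good_mgu {F : Type} :
    ∀ (n : ℕ) (z w : List (Trm F)), sizeOf w ≤ n →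
    (∃ θ, IsUnifierList θ z w) →
    varsList z ∩ varsList w = ∅ → LinearList w →
    ∃ σ : Subst F, IsMguList σ z w ∧ Relev σ (varsList z ∪ varsList w) ∧
      GoodSub σ (varsList w) := by
  intro n
  induction n using Nat.strong_induction_on with
  | _ n IH =>
  rintro z w hsz ⟨θ₀, hθ₀⟩ hdisj hlin
  have hD : ∀ x, x ∈ varsList z → x ∉ varsList w := by
    intro x hx hw
    exact absurd (Set.mem_inter hx hw) (by rw [hdisj]; exact id)
  match w with
  | [] =>
    match z with
    | [] =>
      refine ⟨Trm.var, ⟨rfl, fun σ' _ => ⟨σ', funext fun x => by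
        simp [Subst.comp]⟩⟩, fun x => Or.inl rfl, ?_⟩
      intro a b hne _ _
      simp [Set.singleton_inter_eq_empty, hne, Ne.symm hne]
    | z1 :: z' => exact absurd (unifierList_length hθ₀) (by simp)
  | w1 :: w' =>
    match z with
    | [] => exact absurd (unifierList_length hθ₀) (by simp)
    | z1 :: z' =>
    have hcons := unifierList_cons_iff.1 hθ₀
    have hLw' : LinearList w' := by
      intro x
      have := hlin x
      rw [varCountList_cons] at this
      omega
    have hw1w' : ∀ x, x ∈ w1.vars → x ∉ varsList w' := by
      intro x hx hx'
      have h1 := (Trm.mem_vars_iff_count x w1).1 hx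
      have h2 := mem_varsList_iff_count.1 hx'
      have := hlin x
      rw [varCountList_cons] at this
      omega
    have hzz' : ∀ x, x ∈ varsList z' → x ∈ varsList (z1 :: z') := by
      intro x hx; rw [varsList_cons]; exact Or.inr hx
    have hz1z : ∀ x, x ∈ z1.vars → x ∈ varsList (z1 :: z') := by
      intro x hx; rw [varsList_cons]; exact Or.inl hx
    have hww' : ∀ x, x ∈ varsList w' → x ∈ varsList (w1 :: w') := by
      intro x hx; rw [varsList_cons]; exact Or.inr hx
    have hw1w : ∀ x, x ∈ w1.vars → x ∈ varsList (w1 :: w') := by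
      intro x hx; rw [varsList_cons]; exact Or.inl hx
    have hszw' : sizeOf w' < n := by
      have : sizeOf w' < sizeOf (w1 :: w') := by simp
      omega
    match w1, hcons, hlin, hw1w', hw1w with
    | .var v, hcons, hlin, hw1w', hw1w =>
      -- Case A : w1 is a variable `v`; bind v ↦ z1.
      have hv : v ∉ z1.vars := by
        intro hv
        exact hD v (hz1z v hv) (hw1w v (by simp))
      have hvz' : v ∉ varsList z' := by
        intro hv
        exact hD v (hzz' v hv) (hw1w v (by simp))
      have hvw' : v ∉ varsList w' := hw1w' v (by simp)
      set σ1 : Subst F := elemSub v z1 with hσ1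
      have hm1 : IsMguList σ1 [z1] [.var v] := mgu_elem_right hv
      have hz'' : substList σ1 z' = z' :=
        substList_eq_of_vars fun x hx => elemSub_ne _ (by rintro rfl; exact hvz' hx)
      have hw'' : substList σ1 w' = w' :=
        substList_eq_of_vars fun x hx => elemSub_ne _ (by rintro rfl; exact hvw' hx)
      -- unifier of the subproblem
      obtain ⟨γ, hγ⟩ := hm1.2 θ₀ (isUnifierList_singleton.2 hcons.1)
      have hγu : IsUnifierList γ z' w' := by
        have : IsUnifierList γ (substList σ1 z') (substList σ1 w') := by
          unfold IsUnifierList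
          rw [← substList_comp, ← substList_comp, hγ]
          exact hcons.2
        rwa [hz'', hw''] at this
      have hdisj2 : varsList z' ∩ varsList w' = ∅ := by
        rw [Set.eq_empty_iff_forall_notMem]
        rintro x ⟨hx1, hx2⟩
        exact hD x (hzz' x hx1) (hww' x hx2)
      obtain ⟨σ2, hm2, hr2, hg2⟩ :=
        IH (sizeOf w') hszw' z' w' le_rfl ⟨γ, hγu⟩ hdisj2 hLw'
      refine ⟨Subst.comp σ1 σ2, ?_, ?_, ?_⟩
      · exact mgu_comp hm1 (by rw [hz'', hw'']; exact hm2)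
      · refine Relev.comp ((relev_elemSub v z1).mono ?_) (hr2.mono ?_)
        · rintro x (hx | hx)
          · simp only [Set.mem_singleton_iff] at hx
            subst hx
            exact Or.inr (hw1w x (by simp))
          · exact Or.inl (hz1z x hx)
        · rintro x (hx | hx)
          · exact Or.inl (hzz' x hx)
          · exact Or.inr (hww' x hx)
      · have hS : ({v} ∪ z1.vars) ∩ varsList w' = ∅ := by
          rw [Set.eq_empty_iff_forall_notMem]
          rintro x ⟨hx1 | hx1, hx2⟩
          · simp only [Set.mem_singleton_iff] at hx1
            subst hx1; exact hvw' hx2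
          · exact hD x (hz1z x hx1) (hww' x hx2)
        have := GoodSub.comp (goodSub_elemSub_dom v z1) hg2 (relev_elemSub v z1) hS
        refine this.mono ?_
        rw [varsList_cons]
        simp
    | .fn f us, hcons, hlin, hw1w', hw1w =>
    match z1, hcons with
    | .var x, hcons =>
      -- Case B : z1 is a variable `x`; bind x ↦ w1.
      have hx : x ∉ (Trm.fn f us).vars := by
        intro hx
        exact hD x (hz1z x (by simp)) (hw1w x hx)
      have hxw' : x ∉ varsList w' := by
        intro hx
        exact hD x (hz1z x (by simp)) (hww' x hx)
      set σ1 : Subst F := elemSub x (Trm.fn f us) with hσ1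
      have hm1 : IsMguList σ1 [.var x] [.fn f us] := mgu_elem_left hx
      have hw'' : substList σ1 w' = w' :=
        substList_eq_of_vars fun y hy => elemSub_ne _ (by rintro rfl; exact hxw' hy)
      obtain ⟨γ, hγ⟩ := hm1.2 θ₀ (isUnifierList_singleton.2 hcons.1)
      have hγu : IsUnifierList γ (substList σ1 z') w' := by
        have : IsUnifierList γ (substList σ1 z') (substList σ1 w') := by
          unfold IsUnifierList
          rw [← substList_comp, ← substList_comp, hγ]
          exact hcons.2
        rwa [hw''] at this
      have hsub1 : varsList (substList σ1 z') ⊆ varsList z' ∪ (Trm.fn f us).vars := by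
        rw [varsList_substList]
        refine Set.iUnion₂_subset fun y hy => ?_
        by_cases hyx : y = x
        · subst hyx
          rw [hσ1, elemSub_same]
          exact Set.subset_union_right
        · rw [hσ1, elemSub_ne _ hyx]
          intro c hc
          simp only [Trm.vars_var, Set.mem_singleton_iff] at hc
          subst hc
          exact Or.inl hy
      have hdisj2 : varsList (substList σ1 z') ∩ varsList w' = ∅ := by
        rw [Set.eq_empty_iff_forall_notMem]
        rintro y ⟨hy1, hy2⟩
        rcases hsub1 hy1 with h | h
        · exact hD y (hzz' y h) (hww' y hy2)
        · exact hw1w' y h hy2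
      obtain ⟨σ2, hm2, hr2, hg2⟩ :=
        IH (sizeOf w') hszw' (substList σ1 z') w' le_rfl ⟨γ, hγu⟩ hdisj2 hLw'
      refine ⟨Subst.comp σ1 σ2, ?_, ?_, ?_⟩
      · exact mgu_comp hm1 (by rw [hw'']; exact hm2)
      · refine Relev.comp ((relev_elemSub x (Trm.fn f us)).mono ?_) (hr2.mono ?_)
        · rintro y (hy | hy)
          · simp only [Set.mem_singleton_iff] at hy
            subst hy
            exact Or.inl (hz1z y (by simp))
          · exact Or.inr (hw1w y hy)
        · rintro y (hy | hy)
          · rcases hsub1 hy with h | h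
            · exact Or.inl (hzz' y h)
            · exact Or.inr (hw1w y h)
          · exact Or.inr (hww' y hy)
      · have hS : ({x} ∪ (Trm.fn f us).vars) ∩ varsList w' = ∅ := by
          rw [Set.eq_empty_iff_forall_notMem]
          rintro y ⟨hy1 | hy1, hy2⟩
          · simp only [Set.mem_singleton_iff] at hy1
            subst hy1; exact hxw' hy2
          · exact hw1w' y hy1 hy2
        have := GoodSub.comp (goodSub_elemSub' x (Trm.fn f us)) hg2
          (relev_elemSub x (Trm.fn f us)) hS
        refine this.mono ?_
        rw [varsList_cons]
    | .fn g ts, hcons =>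
      -- Case C : both are function terms; flatten.
      have hfn := hcons.1
      rw [Trm.subst_fn, Trm.subst_fn, Trm.fn.injEq] at hfn
      obtain ⟨rfl, hmap⟩ := hfn
      have hlen : ts.length = us.length := by
        have := congrArg List.length hmap
        simpa using this
      have hu : IsUnifierList θ₀ (ts ++ z') (us ++ w') := by
        rw [unifierList_append_iff hlen]
        exact ⟨hmap, hcons.2⟩
      have hsz' : sizeOf (us ++ w') < n := by
        have h1 := sizeOf_append_trm us w'
        have h2 : sizeOf (Trm.fn g us :: w') ≤ n := hsz
        simp only [List.cons.sizeOf_spec, Trm.fn.sizeOf_spec] at h2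
        omega
      have hVts : (Trm.fn g ts).vars = varsList ts := by
        rw [Trm.vars_fn]; rfl
      have hVus : (Trm.fn g us).vars = varsList us := by
        rw [Trm.vars_fn]; rfl
      have hVz : varsList (ts ++ z') = varsList (Trm.fn g ts :: z') := by
        rw [varsList_append, varsList_cons, hVts]
      have hVw : varsList (us ++ w') = varsList (Trm.fn g us :: w') := by
        rw [varsList_append, varsList_cons, hVus]
      have hlin' : LinearList (us ++ w') := by
        intro y
        have := hlin y
        rw [varCountList_cons, Trm.varCount_fn] at this
        rw [varCountList_append]
        have hco : varCountList y us = (us.map (fun t => t.varCount y)).sum := rfl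
        omega
      obtain ⟨σ, hm, hr, hg⟩ :=
        IH (sizeOf (us ++ w')) hsz' (ts ++ z') (us ++ w') le_rfl ⟨θ₀, hu⟩
          (by rw [hVz, hVw]; exact hdisj) hlin'
      exact ⟨σ, mgu_flatten hlen hm, by rw [← hVz, ← hVw]; exact hr,
        by rw [← hVw]; exact hg⟩

theorem stmt1' {F : Type} (z w : List (Trm F)) (θ : Subst F)
    (hdisj : varsList z ∩ varsList w = ∅) (hlin : LinearList w)
    (hmgu : IsMguList θ z w) (s1 s2 : Trm F)
    (h1 : OccursInList s1 z) (h2 : OccursInList s2 z)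
    (h12 : s1.vars ∩ s2.vars = ∅) :
    (s1.subst θ).vars ∩ (s2.subst θ).vars = ∅ := by
  have hD : ∀ x, x ∈ varsList z → x ∉ varsList w := by
    intro x hx hw
    exact absurd (Set.mem_inter hx hw) (by rw [hdisj]; exact id)
  obtain ⟨σ, hmguσ, hrel, hgood⟩ :=
    exists_good_mgu (sizeOf w) z w le_rfl ⟨θ, hmgu.1⟩ hdisj hlin
  obtain ⟨γ, hγ⟩ := hmgu.2 σ hmguσ.1
  obtain ⟨δ, hδ⟩ := hmguσ.2 θ hmgu.1
  have hid : Subst.comp θ (Subst.comp γ δ) = θ := by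
    rw [← Subst.comp_assoc, hγ, hδ]
  have key : ∀ s : Trm F, (s.subst θ).subst (Subst.comp γ δ) = s.subst θ := by
    intro s
    rw [← Trm.subst_comp, hid]
  obtain ⟨t1, ht1, hsub1⟩ := h1
  obtain ⟨t2, ht2, hsub2⟩ := h2
  have hv1 : s1.vars ⊆ varsList z :=
    hsub1.vars_subset.trans (fun x hx => mem_varsList.2 ⟨t1, ht1, hx⟩)
  have hv2 : s2.vars ⊆ varsList z :=
    hsub2.vars_subset.trans (fun x hx => mem_varsList.2 ⟨t2, ht2, hx⟩)
  have hσdisj : (s1.subst σ).vars ∩ (s2.subst σ).vars = ∅ := by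
    rw [Set.eq_empty_iff_forall_notMem]
    rintro u ⟨hu1, hu2⟩
    rw [Trm.vars_subst] at hu1 hu2
    simp only [Set.mem_iUnion] at hu1 hu2
    obtain ⟨a, ha, hua⟩ := hu1
    obtain ⟨b, hb, hub⟩ := hu2
    have hab : a ≠ b := by
      rintro rfl
      exact absurd (Set.mem_inter ha hb) (by rw [h12]; exact id)
    have := hgood a b hab (hD a (hv1 ha)) (hD b (hv2 hb))
    exact absurd (Set.mem_inter hua hub) (by rw [this]; exact id)
  rw [Set.eq_empty_iff_forall_notMem]
  rintro v ⟨hvθ1, hvθ2⟩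
  have hfix : (γ v).subst δ = Trm.var v :=
    Trm.vars_of_subst_eq_self (s1.subst θ) (key s1) v hvθ1
  obtain ⟨u, hu, _⟩ := Trm.eq_var_of_subst_eq_var hfix
  have hs1σ : s1.subst σ = (s1.subst θ).subst γ := by rw [← Trm.subst_comp, hγ]
  have hs2σ : s2.subst σ = (s2.subst θ).subst γ := by rw [← Trm.subst_comp, hγ]
  have hu1 : u ∈ (s1.subst σ).vars := by
    rw [hs1σ, Trm.vars_subst]
    exact Set.mem_biUnion hvθ1 (by rw [hu]; simp)
  have hu2 : u ∈ (s2.subst σ).vars := by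
    rw [hs2σ, Trm.vars_subst]
    exact Set.mem_biUnion hvθ2 (by rw [hu]; simp)
  exact absurd (Set.mem_inter hu1 hu2) (by rw [hσdisj]; exact id)


/-- Let `z` and `w` be two variable-disjoint sequences of terms
such that `w` is linear and `θ = mgu(z, w)`. If `s1` and `s2` are two
variable-disjoint terms occurring in `z`, then `s1 θ` and `s2 θ` are
variable-disjoint terms. -/
theorem stmt1 {F : Type} (z w : List (Trm F)) (θ : Subst F)
    (hdisj : varsList z ∩ varsList w = ∅) (hlin : LinearList w)
    (hmgu : IsMguList θ z w) (s1 s2 : Trm F)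
    (h1 : OccursInList s1 z) (h2 : OccursInList s2 z)
    (h12 : s1.vars ∩ s2.vars = ∅) :
    (s1.subst θ).vars ∩ (s2.subst θ).vars = ∅ :=
  stmt1' z w θ hdisj hlin hmgu s1 s2 h1 h2 h12
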